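/- If G is a generic filter (meeting the dense sets D_ξ and E_{ξ,n} above) for the almost-disjoint coding forcing and R = ⋃{s : (s,s*) ∈ G}, then for all ξ < ω₁: ξ ∈ b if and only if R ∩ R_ξ is finite. -/
import Mathlib


/-- A condition in the almost-disjoint coding forcing: a pair of a finite subset of `ω`
and a finite set of ordinals contained in `b`. -/
def ADCond (b : Set Ordinal) (p : Finset ℕ × Finset Ordinal) : Prop :=
  (↑p.2 : Set Ordinal) ⊆ b

/-- Extension in the almost-disjoint coding forcing. -/
def ADle (R : Ordinal → Set ℕ) (p q : Finset ℕ × Finset Ordinal) : Prop :=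
  q.1 ⊆ p.1 ∧ (∀ n ∈ p.1, n ∉ q.1 → ∀ m ∈ q.1, m < n) ∧ q.2 ⊆ p.2 ∧
    ∀ ξ ∈ q.2, ∀ n ∈ p.1, n ∉ q.1 → n ∉ R ξ

/-- If `G` is a filter on the almost-disjoint coding forcing meeting the
dense sets `D_ξ` (for `ξ ∈ b`) and `E_{ξ,n}` (for `ξ ∉ b`), and
`R* = ⋃{s : (s,s*) ∈ G}`, then for all `ξ < ω₁`: `ξ ∈ b ↔ R* ∩ R_ξ` is finite. -/
theorem ad_coding_decoding
    (ω1 : Ordinal) (hω1 : ω1 = (Cardinal.aleph 1).ord)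
    (R : Ordinal → Set ℕ)
    (hinf : ∀ ξ < ω1, (R ξ).Infinite)
    (had : ∀ ξ < ω1, ∀ η < ω1, ξ ≠ η → (R ξ ∩ R η).Finite)
    (b : Set Ordinal) (hb : ∀ ξ ∈ b, ξ < ω1)
    (G : Set (Finset ℕ × Finset Ordinal))
    (hGcond : ∀ p ∈ G, ADCond b p)
    (hdir : ∀ p ∈ G, ∀ q ∈ G, ∃ r ∈ G, ADle R r p ∧ ADle R r q)
    (hup : ∀ p ∈ G, ∀ q, ADCond b q → ADle R p q → q ∈ G)
    (hmeetD : ∀ ξ ∈ b, ∃ p ∈ G, ξ ∈ p.2)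
    (hmeetE : ∀ ξ < ω1, ξ ∉ b → ∀ n : ℕ, ∃ p ∈ G, n ≤ ((↑p.1 : Set ℕ) ∩ R ξ).ncard) :
    ∀ ξ < ω1, (ξ ∈ b ↔ ({n : ℕ | ∃ p ∈ G, n ∈ p.1} ∩ R ξ).Finite) := by
  intro ξ hξ
  constructor
  · intro hξb
    obtain ⟨p, hpG, hξp⟩ := hmeetD ξ hξb
    apply Set.Finite.subset p.1.finite_toSet
    rintro n ⟨⟨q, hqG, hnq⟩, hnR⟩
    by_contra hnp
    obtain ⟨r, hrG, hrp, hrq⟩ := hdir p hpG q hqG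
    exact hrp.2.2.2 ξ hξp n (hrq.1 hnq) hnp hnR
  · intro hfin
    by_contra hξb
    obtain ⟨p, hpG, hcard⟩ := hmeetE ξ hξ hξb (hfin.toFinset.card + 1)
    have hsub : (↑p.1 : Set ℕ) ∩ R ξ ⊆ {n : ℕ | ∃ p ∈ G, n ∈ p.1} ∩ R ξ := by
      rintro n ⟨hn1, hn2⟩; exact ⟨⟨p, hpG, hn1⟩, hn2⟩
    have := Set.ncard_le_ncard hsub hfin
    have h2 : ({n : ℕ | ∃ p ∈ G, n ∈ p.1} ∩ R ξ).ncard = hfin.toFinset.card := by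
      rw [← Set.ncard_coe_finset, Set.Finite.coe_toFinset]
    rw [h2] at this
    omega
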